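/- (Corollary 5.1 of the paper for the Kolmogorov pseudo-metric, simple-function case.) For every u ∈ 𝒰^c there exists v ∈ 𝒰_N^c such that d_I(u,v) ≤ 2L(β₁ + β₂); namely, the Type-1 piecewise linear function built from the gridpoint values of u belongs to 𝒰_N^c and is within pseudo-distance 2L(β₁+β₂) of u. Since moreover 𝒰_N^c ⊆ 𝒰^c, the Hausdorff distance under d_I, namely ℍ_I(𝒰^c, 𝒰_N^c) := max{ sup_{u∈𝒰^c} inf_{v∈𝒰_N^c} d_I(u,v), sup_{v∈𝒰_N^c} inf_{u∈𝒰^c} d_I(v,u) }, satisfies ℍ_I(𝒰^c, 𝒰_N^c) ≤ 2L(β₁ + β₂), where β₁ := max_{1≤i≤N₁−1}(x_{i+1}−x_i) and β₂ := max_{1≤j≤N₂−1}(y_{j+1}−y_j). -/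

import Mathlib

open Finset Set
open scoped Classical

noncomputable section

/-- Lower-triangle linear piece of the Type-1 PLA over cell `(i,j)`. -/
def u1l (x y : ℕ → ℝ) (u : ℕ → ℕ → ℝ) (i j : ℕ) (p q : ℝ) : ℝ :=
  ((x (i + 1) - p) / (x (i + 1) - x i)) * u i j
    + ((p - x i) / (x (i + 1) - x i) - (q - y j) / (y (j + 1) - y j)) * u (i + 1) j
    + ((q - y j) / (y (j + 1) - y j)) * u (i + 1) (j + 1)

/-- Upper-triangle linear piece of the Type-1 PLA over cell `(i,j)`. -/
def u1u (x y : ℕ → ℝ) (u : ℕ → ℕ → ℝ) (i j : ℕ) (p q : ℝ) : ℝ :=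
  ((y (j + 1) - q) / (y (j + 1) - y j)) * u i j
    + ((q - y j) / (y (j + 1) - y j) - (p - x i) / (x (i + 1) - x i)) * u i (j + 1)
    + ((p - x i) / (x (i + 1) - x i)) * u (i + 1) (j + 1)

/-- Membership in the half-open interval `X_i` (closed at the left end for `i = 1`). -/
def memX (x : ℕ → ℝ) (i : ℕ) (p : ℝ) : Prop :=
  if i = 1 then x 1 ≤ p ∧ p ≤ x 2 else x i < p ∧ p ≤ x (i + 1)

/-- Membership in the cell `T_{i,j} = X_i × Y_j`. -/
def memCell (x y : ℕ → ℝ) (i j : ℕ) (p q : ℝ) : Prop :=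
  memX x i p ∧ memX y j q

/-- The Type-1 piecewise linear function built from the grid values `u i j`. -/
def uPL (N₁ N₂ : ℕ) (x y : ℕ → ℝ) (u : ℕ → ℕ → ℝ) (p q : ℝ) : ℝ :=
  ∑ i ∈ Finset.Icc 1 (N₁ - 1), ∑ j ∈ Finset.Icc 1 (N₂ - 1),
    if memCell x y i j p q then
      (if (q - y j) * (x (i + 1) - x i) ≤ (p - x i) * (y (j + 1) - y j)
        then u1l x y u i j p q else u1u x y u i j p q)
    else 0


/-- Membership in the class `𝒰`: continuous, componentwise non-decreasing, `[0,1]`-valued,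
normalized utility functions on `T` satisfying the conservative property and ℓ¹-Lipschitz
continuity with modulus `L`. -/
def memU (N₁ N₂ : ℕ) (x y : ℕ → ℝ) (L : ℝ) (u : ℝ → ℝ → ℝ) : Prop :=
  ContinuousOn (fun pq : ℝ × ℝ => u pq.1 pq.2)
      (Set.Icc (x 1) (x N₁) ×ˢ Set.Icc (y 1) (y N₂)) ∧
  (∀ p p' q q', p ∈ Set.Icc (x 1) (x N₁) → p' ∈ Set.Icc (x 1) (x N₁) →
    q ∈ Set.Icc (y 1) (y N₂) → q' ∈ Set.Icc (y 1) (y N₂) →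
    p ≤ p' → q ≤ q' → u p q ≤ u p' q') ∧
  (∀ p ∈ Set.Icc (x 1) (x N₁), ∀ q ∈ Set.Icc (y 1) (y N₂), u p q ∈ Set.Icc (0 : ℝ) 1) ∧
  u (x 1) (y 1) = 0 ∧ u (x N₁) (y N₂) = 1 ∧
  (∀ a b c d : ℝ, x 1 ≤ a → a ≤ b → b ≤ x N₁ → y 1 ≤ c → c ≤ d → d ≤ y N₂ →
    u a c + u b d ≤ u a d + u b c) ∧
  (∀ p p' q q', p ∈ Set.Icc (x 1) (x N₁) → p' ∈ Set.Icc (x 1) (x N₁) →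
    q ∈ Set.Icc (y 1) (y N₂) → q' ∈ Set.Icc (y 1) (y N₂) →
    |u p q - u p' q'| ≤ L * (|p - p'| + |q - q'|))

/-- Membership in the ambiguity set `𝒰^c`: members of `𝒰` satisfying the linear gridpoint
constraints (the form taken by the Lebesgue–Stieltjes constraints when each `ψ_l` is a simple
function constant on the cells). -/
def memUc (N₁ N₂ M : ℕ) (x y : ℕ → ℝ) (L : ℝ) (a : ℕ → ℕ → ℕ → ℝ) (c : ℕ → ℝ)
    (u : ℝ → ℝ → ℝ) : Prop :=
  memU N₁ N₂ x y L u ∧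
  ∀ l ∈ Finset.Icc 1 M,
    ∑ i ∈ Finset.Icc 1 N₁, ∑ j ∈ Finset.Icc 1 N₂, a l i j * u (x i) (y j) ≤ c l

/-- Membership in `𝒰_N^c`: members of `𝒰^c` that coincide on `T` with the Type-1 piecewise
linear function built from their own gridpoint values. -/
def memUNc (N₁ N₂ M : ℕ) (x y : ℕ → ℝ) (L : ℝ) (a : ℕ → ℕ → ℕ → ℝ) (c : ℕ → ℝ)
    (u : ℝ → ℝ → ℝ) : Prop :=
  memUc N₁ N₂ M x y L a c u ∧
  ∀ p ∈ Set.Icc (x 1) (x N₁), ∀ q ∈ Set.Icc (y 1) (y N₂),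
    u p q = uPL N₁ N₂ x y (fun i j => u (x i) (y j)) p q

/-!
On each cell the Type-1 interpolant is the maximum of its two affine pieces, because their
difference is `s · (P(p) - Q(q))` with `P, Q` the normalized coordinates and
`s = g(i+1,j) + g(i,j+1) - g(i,j) - g(i+1,j+1) ≥ 0` by the conservative property of the grid
values. Such a maximum is monotone and `L`-Lipschitz in each variable, and it is conservative
since `2 max(A, B) = A + B + |A - B|` and `|P(p) - Q(q)|` is conservative. Adjacent cells agree
on their common edge, so these properties chain across `T`, and the interpolant of an element
of `𝒰^c` lies in `𝒰_N^c`.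

For the distance, the conservative property makes the rectangle increment
`Δf(p,q) = f(p,q) - f(p,y₁) - f(x₁,q) + f(x₁,y₁)` antitone in both variables. On a cell both
`Δu` and the increment of the interpolant therefore lie between their common values at the
lower-left and upper-right corners, and the Lipschitz property bounds the gap between these two
values by `2L(β₁ + β₂)`.
-/

def lerp (t₀ t₁ a b t : ℝ) : ℝ :=
  (t₁ - t) / (t₁ - t₀) * a + (t - t₀) / (t₁ - t₀) * b

lemma lerp_left {t₀ t₁ : ℝ} (h : t₀ ≠ t₁) (a b : ℝ) : lerp t₀ t₁ a b t₀ = a := by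
  have : t₁ - t₀ ≠ 0 := sub_ne_zero.mpr h.symm
  simp [lerp, this]

lemma lerp_right {t₀ t₁ : ℝ} (h : t₀ ≠ t₁) (a b : ℝ) : lerp t₀ t₁ a b t₁ = b := by
  have : t₁ - t₀ ≠ 0 := sub_ne_zero.mpr h.symm
  simp [lerp, this]

lemma two_mul_max_eq (a b : ℝ) : 2 * max a b = a + b + |a - b| := by
  have h₁ := max_sub_min_eq_abs a b
  have h₂ := min_add_max a b
  rw [abs_sub_comm] at h₁
  linarith

lemma abs_sub_add_abs_sub_le {a b c d : ℝ} (hab : a ≤ b) (hcd : c ≤ d) :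
    |a - c| + |b - d| ≤ |a - d| + |b - c| := by
  rcases abs_cases (a - c) with ⟨h₁, _⟩ | ⟨h₁, _⟩ <;>
  rcases abs_cases (b - d) with ⟨h₂, _⟩ | ⟨h₂, _⟩ <;>
  rcases abs_cases (a - d) with ⟨h₃, _⟩ | ⟨h₃, _⟩ <;>
  rcases abs_cases (b - c) with ⟨h₄, _⟩ | ⟨h₄, _⟩ <;> linarith

def BoundedIncrease (L : ℝ) (f : ℝ → ℝ) (p p' : ℝ) : Prop :=
  f p ≤ f p' ∧ f p' ≤ f p + L * (p' - p)

namespace BoundedIncrease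

variable {L : ℝ} {f f' : ℝ → ℝ} {p p' p'' : ℝ}

lemma trans (h : BoundedIncrease L f p p') (h' : BoundedIncrease L f p' p'') :
    BoundedIncrease L f p p'' :=
  ⟨h.1.trans h'.1, by linarith [h.2, h'.2]⟩

protected lemma max (h : BoundedIncrease L f p p') (h' : BoundedIncrease L f' p p') :
    BoundedIncrease L (fun t => max (f t) (f' t)) p p' :=
  ⟨max_le_max h.1 h'.1, (max_le_max h.2 h'.2).trans (max_add_add_right _ _ _).le⟩

lemma of_sub_eq {a b A B : ℝ} (hab : a < b) (hf : f p' - f p = (p' - p) / (b - a) * (B - A))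
    (hAB : A ≤ B ∧ B ≤ A + L * (b - a)) (hpp : p ≤ p') : BoundedIncrease L f p p' := by
  have hr : 0 ≤ (p' - p) / (b - a) := div_nonneg (sub_nonneg.mpr hpp) (sub_pos.mpr hab).le
  have hscale : (p' - p) / (b - a) * (L * (b - a)) = L * (p' - p) := by
    field_simp [(sub_pos.mpr hab).ne']
  constructor
  · linarith [mul_nonneg hr (sub_nonneg.mpr hAB.1)]
  · linarith [mul_le_mul_of_nonneg_left (sub_le_iff_le_add'.mpr hAB.2) hr]

end BoundedIncrease

lemma abs_sub_le_of_boundedIncrease {L : ℝ} {f : ℝ → ℝ} {s : Set ℝ}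
    (h : ∀ p ∈ s, ∀ p' ∈ s, p ≤ p' → BoundedIncrease L f p p') {p p' : ℝ}
    (hp : p ∈ s) (hp' : p' ∈ s) : |f p - f p'| ≤ L * |p - p'| := by
  rcases le_total p p' with hpp | hpp
  · obtain ⟨h₁, h₂⟩ := h p hp p' hp' hpp
    rw [abs_sub_comm, abs_of_nonneg (by linarith), abs_sub_comm, abs_of_nonneg (by linarith)]
    linarith
  · obtain ⟨h₁, h₂⟩ := h p' hp' p hp hpp
    rw [abs_of_nonneg (by linarith), abs_of_nonneg (by linarith)]
    linarith

def ConservativeOn (a₀ a₁ c₀ c₁ : ℝ) (u : ℝ → ℝ → ℝ) : Prop :=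
  ∀ a b c d : ℝ, a₀ ≤ a → a ≤ b → b ≤ a₁ → c₀ ≤ c → c ≤ d → d ≤ c₁ →
    u a c + u b d ≤ u a d + u b c

section Cell

variable {x y : ℕ → ℝ} {g : ℕ → ℕ → ℝ} {i j : ℕ} {L p p' q : ℝ}

def cellMax (x y : ℕ → ℝ) (g : ℕ → ℕ → ℝ) (i j : ℕ) (p q : ℝ) : ℝ :=
  max (u1l x y g i j p q) (u1u x y g i j p q)

/-- Swapping the axes exchanges the two triangles, so facts in `q` follow from facts in `p`. -/
lemma cellMax_transpose (p q : ℝ) :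
    cellMax y x (fun j i => g i j) j i q p = cellMax x y g i j p q :=
  max_comm _ _

lemma u1l_sub_u1u (hdx : x i < x (i + 1)) (hdy : y j < y (j + 1)) (p q : ℝ) :
    u1l x y g i j p q - u1u x y g i j p q
      = (g (i + 1) j + g i (j + 1) - g i j - g (i + 1) (j + 1))
          * ((p - x i) / (x (i + 1) - x i) - (q - y j) / (y (j + 1) - y j)) := by
  have : x (i + 1) - x i ≠ 0 := (sub_pos.mpr hdx).ne'
  have : y (j + 1) - y j ≠ 0 := (sub_pos.mpr hdy).ne'
  simp only [u1l, u1u]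
  field_simp
  ring

variable (hdx : x i < x (i + 1)) (hdy : y j < y (j + 1))
  (hs : g i j + g (i + 1) (j + 1) ≤ g (i + 1) j + g i (j + 1))
include hdx hdy hs

lemma cellMax_eq_u1l (h : (q - y j) / (y (j + 1) - y j) ≤ (p - x i) / (x (i + 1) - x i)) :
    cellMax x y g i j p q = u1l x y g i j p q := by
  have hdiff := u1l_sub_u1u (g := g) hdx hdy p q
  exact max_eq_left (sub_nonneg.mp (hdiff ▸ mul_nonneg (by linarith) (sub_nonneg.mpr h)))

lemma cellMax_eq_u1u (h : (p - x i) / (x (i + 1) - x i) ≤ (q - y j) / (y (j + 1) - y j)) :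
    cellMax x y g i j p q = u1u x y g i j p q := by
  have hdiff := u1l_sub_u1u (g := g) hdx hdy p q
  exact max_eq_right (sub_nonpos.mp (hdiff ▸ mul_nonpos_of_nonneg_of_nonpos (by linarith)
    (sub_nonpos.mpr h)))

lemma ite_eq_cellMax (p q : ℝ) :
    (if (q - y j) * (x (i + 1) - x i) ≤ (p - x i) * (y (j + 1) - y j)
      then u1l x y g i j p q else u1u x y g i j p q) = cellMax x y g i j p q := by
  have hdiv := div_le_div_iff₀ (a := q - y j) (c := p - x i) (sub_pos.mpr hdy) (sub_pos.mpr hdx)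
  split_ifs with h
  · exact (cellMax_eq_u1l hdx hdy hs (hdiv.mpr h)).symm
  · exact (cellMax_eq_u1u hdx hdy hs (le_of_not_ge (hdiv.not.mpr h))).symm

lemma cellMax_left_edge (hq : y j ≤ q) :
    cellMax x y g i j (x i) q = lerp (y j) (y (j + 1)) (g i j) (g i (j + 1)) q := by
  have hQ := div_nonneg (sub_nonneg.mpr hq) (sub_pos.mpr hdy).le
  rw [cellMax_eq_u1u hdx hdy hs (by simpa using hQ)]
  simp [u1u, lerp]

lemma cellMax_right_edge (hq : q ≤ y (j + 1)) :
    cellMax x y g i j (x (i + 1)) q =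
      lerp (y j) (y (j + 1)) (g (i + 1) j) (g (i + 1) (j + 1)) q := by
  have hdx' : x (i + 1) - x i ≠ 0 := (sub_pos.mpr hdx).ne'
  have hdy' : 0 < y (j + 1) - y j := sub_pos.mpr hdy
  rw [cellMax_eq_u1l hdx hdy hs (by rw [div_self hdx', div_le_one hdy']; linarith)]
  simp only [u1l, lerp, sub_self, zero_div, zero_mul, zero_add, div_self hdx']
  field_simp
  ring

lemma cellMax_vertex {k l : ℕ} (hk : k = i ∨ k = i + 1) (hl : l = j ∨ l = j + 1) :
    cellMax x y g i j (x k) (y l) = g k l := by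
  rcases hk with rfl | rfl <;> rcases hl with rfl | rfl
  · rw [cellMax_left_edge hdx hdy hs le_rfl, lerp_left hdy.ne]
  · rw [cellMax_left_edge hdx hdy hs hdy.le, lerp_right hdy.ne]
  · rw [cellMax_right_edge hdx hdy hs hdy.le, lerp_left hdy.ne]
  · rw [cellMax_right_edge hdx hdy hs le_rfl, lerp_right hdy.ne]

lemma cellMax_conservative {a b c d : ℝ} (hab : a ≤ b) (hcd : c ≤ d) :
    cellMax x y g i j a c + cellMax x y g i j b d ≤
      cellMax x y g i j a d + cellMax x y g i j b c := by
  set s := g (i + 1) j + g i (j + 1) - g i j - g (i + 1) (j + 1)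
  have hs₀ : 0 ≤ s := by linarith
  have two_mul_cellMax : ∀ p q, 2 * cellMax x y g i j p q = u1l x y g i j p q + u1u x y g i j p q
      + s * |(p - x i) / (x (i + 1) - x i) - (q - y j) / (y (j + 1) - y j)| := fun p q => by
    rw [cellMax, two_mul_max_eq, u1l_sub_u1u hdx hdy, abs_mul, abs_of_nonneg hs₀]
  have affine : u1l x y g i j a c + u1u x y g i j a c + (u1l x y g i j b d + u1u x y g i j b d)
      = u1l x y g i j a d + u1u x y g i j a d + (u1l x y g i j b c + u1u x y g i j b c) := by
    simp only [u1l, u1u]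
    ring
  have habs := abs_sub_add_abs_sub_le
    (div_le_div_of_nonneg_right (sub_le_sub_right hab (x i)) (sub_pos.mpr hdx).le)
    (div_le_div_of_nonneg_right (sub_le_sub_right hcd (y j)) (sub_pos.mpr hdy).le)
  have := two_mul_cellMax a c
  have := two_mul_cellMax b d
  have := two_mul_cellMax a d
  have := two_mul_cellMax b c
  linarith [mul_le_mul_of_nonneg_left habs hs₀]

omit hdy hs in
lemma boundedIncrease_cellMax
    (hrow : g i j ≤ g (i + 1) j ∧ g (i + 1) j ≤ g i j + L * (x (i + 1) - x i))
    (hrow' : g i (j + 1) ≤ g (i + 1) (j + 1) ∧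
      g (i + 1) (j + 1) ≤ g i (j + 1) + L * (x (i + 1) - x i))
    (q : ℝ) (hpp : p ≤ p') : BoundedIncrease L (cellMax x y g i j · q) p p' := by
  have hdx' : x (i + 1) - x i ≠ 0 := (sub_pos.mpr hdx).ne'
  refine BoundedIncrease.max (BoundedIncrease.of_sub_eq hdx ?_ hrow hpp)
    (BoundedIncrease.of_sub_eq hdx ?_ hrow' hpp)
  · simp only [u1l]
    field_simp
    ring
  · simp only [u1u]
    field_simp
    ring

end Cell

section Grid

variable {x : ℕ → ℝ} {N i i₀ : ℕ} {p : ℝ}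

lemma StrictMonoOn.apply_lt_apply_add_one (hx : StrictMonoOn x (Set.Icc 1 N)) (hi : 1 ≤ i)
    (hiN : i < N) : x i < x (i + 1) :=
  hx ⟨hi, hiN.le⟩ ⟨by omega, hiN⟩ (lt_add_one i)

lemma StrictMonoOn.apply_mem_Icc (hx : StrictMonoOn x (Set.Icc 1 N)) (hi : 1 ≤ i)
    (hiN : i ≤ N) : x i ∈ Set.Icc (x 1) (x N) :=
  ⟨hx.monotoneOn ⟨le_rfl, by omega⟩ ⟨hi, hiN⟩ hi, hx.monotoneOn ⟨hi, hiN⟩ ⟨by omega, le_rfl⟩ hiN⟩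

lemma memX.mem_Icc (h : memX x i p) : p ∈ Icc (x i) (x (i + 1)) := by
  unfold memX at h
  split_ifs at h with hi
  · subst hi
    exact h
  · exact ⟨h.1.le, h.2⟩

lemma exists_memX (hN : 2 ≤ N) (hp : x 1 ≤ p) (hp' : p ≤ x N) :
    ∃ i, 1 ≤ i ∧ i < N ∧ memX x i p := by
  induction N, hN using Nat.le_induction with
  | base => exact ⟨1, le_rfl, by norm_num, by simpa [memX] using ⟨hp, hp'⟩⟩
  | succ N hN ih =>
    by_cases hpN : p ≤ x N
    · obtain ⟨i, hi, hiN, hmem⟩ := ih hpN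
      exact ⟨i, hi, by omega, hmem⟩
    · refine ⟨N, by omega, by omega, ?_⟩
      rw [memX, if_neg (by omega)]
      exact ⟨lt_of_not_ge hpN, hp'⟩

lemma memX.eq_or_eq_add_one (hx : StrictMonoOn x (Set.Icc 1 N)) (h : memX x i₀ p)
    (hi₀ : 1 ≤ i₀) (hi₀N : i₀ < N) (hi : 1 ≤ i) (hiN : i < N) (hp : p ∈ Icc (x i) (x (i + 1))) :
    i = i₀ ∨ (i = i₀ + 1 ∧ p = x i) := by
  have hp₀ := h.mem_Icc
  rcases lt_trichotomy i i₀ with hlt | rfl | hgt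
  · have : x (i + 1) ≤ x i₀ := hx.monotoneOn ⟨by omega, by omega⟩ ⟨hi₀, hi₀N.le⟩ hlt
    rw [memX, if_neg (by omega)] at h
    linarith [hp.2, h.1]
  · exact Or.inl rfl
  · obtain rfl : i = i₀ + 1 := by
      by_contra hne
      have : x (i₀ + 1) < x i := hx ⟨by omega, by omega⟩ ⟨hi, hiN.le⟩ (by omega)
      linarith [hp.1, hp₀.2]
    exact Or.inr ⟨rfl, le_antisymm hp₀.2 hp.1⟩

lemma memX.unique (hx : StrictMonoOn x (Set.Icc 1 N)) {i' : ℕ} (h : memX x i p) (h' : memX x i' p)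
    (hi : 1 ≤ i) (hiN : i < N) (hi' : 1 ≤ i') (hi'N : i' < N) : i = i' := by
  rcases h'.eq_or_eq_add_one hx hi' hi'N hi hiN h.mem_Icc with rfl | ⟨rfl, hp⟩
  · rfl
  · rw [memX, if_neg (by omega)] at h
    exact absurd hp h.1.ne'

lemma rel_of_cellwise {P : ℝ → ℝ → Prop} (hP : ∀ {a b c}, P a b → P b c → P a c) (hN : 2 ≤ N)
    (hcell : ∀ i, 1 ≤ i → i < N → ∀ p p', x i ≤ p → p ≤ p' → p' ≤ x (i + 1) → P p p')
    {p p' : ℝ} (hp : x 1 ≤ p) (hpp : p ≤ p') (hp' : p' ≤ x N) : P p p' := by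
  induction N, hN using Nat.le_induction generalizing p p' with
  | base => exact hcell 1 le_rfl (by norm_num) p p' hp hpp hp'
  | succ N hN ih =>
    have ih' : ∀ {p p' : ℝ}, x 1 ≤ p → p ≤ p' → p' ≤ x N → P p p' :=
      ih fun i hi hiN => hcell i hi (by omega)
    by_cases hp'N : p' ≤ x N
    · exact ih' hp hpp hp'N
    by_cases hpN : x N ≤ p
    · exact hcell N (by omega) (by omega) p p' hpN hpp hp'
    exact hP (ih' hp (le_of_not_ge hpN) le_rfl)
      (hcell N (by omega) (by omega) (x N) p' le_rfl (le_of_not_ge hp'N) hp')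

end Grid

def GridConservative (N₁ N₂ : ℕ) (g : ℕ → ℕ → ℝ) : Prop :=
  ∀ i j, 1 ≤ i → i < N₁ → 1 ≤ j → j < N₂ → g i j + g (i + 1) (j + 1) ≤ g (i + 1) j + g i (j + 1)

lemma GridConservative.transpose {N₁ N₂ : ℕ} {g : ℕ → ℕ → ℝ} (hg : GridConservative N₁ N₂ g) :
    GridConservative N₂ N₁ (fun j i => g i j) := fun j i hj hjN hi hiN => by
  have := hg i j hi hiN hj hjN
  linarith

section Interpolant

variable {N₁ N₂ : ℕ} {x y : ℕ → ℝ} {g : ℕ → ℕ → ℝ} {L p q : ℝ}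

lemma uPL_congr {g' : ℕ → ℕ → ℝ} (h : ∀ i j, 1 ≤ i → i ≤ N₁ → 1 ≤ j → j ≤ N₂ → g i j = g' i j)
    (p q : ℝ) : uPL N₁ N₂ x y g p q = uPL N₁ N₂ x y g' p q := by
  refine Finset.sum_congr rfl fun i hi => Finset.sum_congr rfl fun j hj => ?_
  obtain ⟨hi, hiN⟩ := Finset.mem_Icc.mp hi
  obtain ⟨hj, hjN⟩ := Finset.mem_Icc.mp hj
  simp only [u1l, u1u, h i j hi (by omega) hj (by omega),
    h (i + 1) j (by omega) (by omega) hj (by omega),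
    h i (j + 1) hi (by omega) (by omega) (by omega),
    h (i + 1) (j + 1) (by omega) (by omega) (by omega) (by omega)]

variable (hx : StrictMonoOn x (Set.Icc 1 N₁)) (hy : StrictMonoOn y (Set.Icc 1 N₂))
  (hg : GridConservative N₁ N₂ g)
include hx hy hg

lemma uPL_eq_cellMax_of_memCell {i j : ℕ} (hi : 1 ≤ i) (hiN : i < N₁) (hj : 1 ≤ j) (hjN : j < N₂)
    (hc : memCell x y i j p q) : uPL N₁ N₂ x y g p q = cellMax x y g i j p q := by
  rw [uPL, Finset.sum_eq_single_of_mem i (Finset.mem_Icc.mpr ⟨hi, by omega⟩),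
    Finset.sum_eq_single_of_mem j (Finset.mem_Icc.mpr ⟨hj, by omega⟩), if_pos hc,
    ite_eq_cellMax (hx.apply_lt_apply_add_one hi hiN) (hy.apply_lt_apply_add_one hj hjN)
      (hg i j hi hiN hj hjN)]
  · intro j' hj' hne
    obtain ⟨hj', hj'N⟩ := Finset.mem_Icc.mp hj'
    exact if_neg fun hc' => hne (hc'.2.unique hy hc.2 hj' (by omega) hj hjN)
  · intro i' hi' hne
    obtain ⟨hi', hi'N⟩ := Finset.mem_Icc.mp hi'
    exact Finset.sum_eq_zero fun j' _ =>
      if_neg fun hc' => hne (hc'.1.unique hx hc.1 hi' (by omega) hi hiN)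

variable (hN₁ : 2 ≤ N₁) (hN₂ : 2 ≤ N₂)
include hN₁ hN₂

lemma uPL_transpose (hp : p ∈ Set.Icc (x 1) (x N₁)) (hq : q ∈ Set.Icc (y 1) (y N₂)) :
    uPL N₂ N₁ y x (fun j i => g i j) q p = uPL N₁ N₂ x y g p q := by
  obtain ⟨i, hi, hiN, hpi⟩ := exists_memX hN₁ hp.1 hp.2
  obtain ⟨j, hj, hjN, hqj⟩ := exists_memX hN₂ hq.1 hq.2
  rw [uPL_eq_cellMax_of_memCell hx hy hg hi hiN hj hjN ⟨hpi, hqj⟩,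
    uPL_eq_cellMax_of_memCell hy hx hg.transpose hj hjN hi hiN ⟨hqj, hpi⟩, cellMax_transpose]

omit hN₁ hN₂ in
/-- Adjacent cells agree on their common vertical edge. -/
lemma cellMax_eq_of_memX {i i₀ j : ℕ} (hi : 1 ≤ i) (hiN : i < N₁) (hi₀ : 1 ≤ i₀) (hi₀N : i₀ < N₁)
    (hj : 1 ≤ j) (hjN : j < N₂) (hpi₀ : memX x i₀ p) (hp : p ∈ Set.Icc (x i) (x (i + 1)))
    (hq : q ∈ Set.Icc (y j) (y (j + 1))) : cellMax x y g i₀ j p q = cellMax x y g i j p q := by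
  rcases hpi₀.eq_or_eq_add_one hx hi₀ hi₀N hi hiN hp with rfl | ⟨rfl, rfl⟩
  · rfl
  have hdy := hy.apply_lt_apply_add_one hj hjN
  rw [cellMax_right_edge (hx.apply_lt_apply_add_one hi₀ hi₀N) hdy (hg i₀ j hi₀ hi₀N hj hjN) hq.2,
    cellMax_left_edge (hx.apply_lt_apply_add_one hi hiN) hdy (hg _ j hi hiN hj hjN) hq.1]

lemma uPL_eq_cellMax {i j : ℕ} (hi : 1 ≤ i) (hiN : i < N₁) (hj : 1 ≤ j) (hjN : j < N₂)
    (hp : p ∈ Set.Icc (x i) (x (i + 1))) (hq : q ∈ Set.Icc (y j) (y (j + 1))) :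
    uPL N₁ N₂ x y g p q = cellMax x y g i j p q := by
  obtain ⟨i₀, hi₀, hi₀N, hpi₀⟩ :=
    exists_memX hN₁ ((hx.apply_mem_Icc hi hiN.le).1.trans hp.1)
      (hp.2.trans (hx.apply_mem_Icc (by omega) hiN).2)
  obtain ⟨j₀, hj₀, hj₀N, hqj₀⟩ :=
    exists_memX hN₂ ((hy.apply_mem_Icc hj hjN.le).1.trans hq.1)
      (hq.2.trans (hy.apply_mem_Icc (by omega) hjN).2)
  rw [uPL_eq_cellMax_of_memCell hx hy hg hi₀ hi₀N hj₀ hj₀N ⟨hpi₀, hqj₀⟩,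
    cellMax_eq_of_memX hx hy hg hi hiN hi₀ hi₀N hj₀ hj₀N hpi₀ hp hqj₀.mem_Icc,
    ← cellMax_transpose, ← cellMax_transpose (j := j),
    cellMax_eq_of_memX hy hx hg.transpose hj hjN hj₀ hj₀N hi hiN hqj₀ hq hp]

lemma uPL_grid {i j : ℕ} (hi : 1 ≤ i) (hiN : i ≤ N₁) (hj : 1 ≤ j) (hjN : j ≤ N₂) :
    uPL N₁ N₂ x y g (x i) (y j) = g i j := by
  obtain ⟨k, hk, hkN, hik⟩ : ∃ k, 1 ≤ k ∧ k < N₁ ∧ (i = k ∨ i = k + 1) :=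
    ⟨min i (N₁ - 1), by omega, by omega, by omega⟩
  obtain ⟨l, hl, hlN, hjl⟩ : ∃ l, 1 ≤ l ∧ l < N₂ ∧ (j = l ∨ j = l + 1) :=
    ⟨min j (N₂ - 1), by omega, by omega, by omega⟩
  have hdx := hx.apply_lt_apply_add_one hk hkN
  have hdy := hy.apply_lt_apply_add_one hl hlN
  have hxi : x i ∈ Set.Icc (x k) (x (k + 1)) := by
    rcases hik with rfl | rfl
    exacts [⟨le_rfl, hdx.le⟩, ⟨hdx.le, le_rfl⟩]
  have hyj : y j ∈ Set.Icc (y l) (y (l + 1)) := by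
    rcases hjl with rfl | rfl
    exacts [⟨le_rfl, hdy.le⟩, ⟨hdy.le, le_rfl⟩]
  rw [uPL_eq_cellMax hx hy hg hN₁ hN₂ hk hkN hl hlN hxi hyj,
    cellMax_vertex hdx hdy (hg k l hk hkN hl hlN) hik hjl]

lemma uPL_conservative : ConservativeOn (x 1) (x N₁) (y 1) (y N₂) (uPL N₁ N₂ x y g) := by
  intro a b c d ha hab hb hc hcd hd
  refine rel_of_cellwise (P := fun a b => uPL N₁ N₂ x y g a c + uPL N₁ N₂ x y g b d ≤
      uPL N₁ N₂ x y g a d + uPL N₁ N₂ x y g b c) (fun h h' => by linarith) hN₁ ?_ ha hab hb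
  intro i hi hiN a b ha hab hb
  refine rel_of_cellwise (P := fun c d => uPL N₁ N₂ x y g a c + uPL N₁ N₂ x y g b d ≤
      uPL N₁ N₂ x y g a d + uPL N₁ N₂ x y g b c) (fun h h' => by linarith) hN₂ ?_ hc hcd hd
  intro j hj hjN c d hc hcd hd
  have cell := fun {p q : ℝ} => uPL_eq_cellMax (p := p) (q := q) hx hy hg hN₁ hN₂ hi hiN hj hjN
  rw [cell ⟨ha, hab.trans hb⟩ ⟨hc, hcd.trans hd⟩, cell ⟨ha.trans hab, hb⟩ ⟨hc.trans hcd, hd⟩,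
    cell ⟨ha, hab.trans hb⟩ ⟨hc.trans hcd, hd⟩, cell ⟨ha.trans hab, hb⟩ ⟨hc, hcd.trans hd⟩]
  exact cellMax_conservative (hx.apply_lt_apply_add_one hi hiN) (hy.apply_lt_apply_add_one hj hjN)
    (hg i j hi hiN hj hjN) hab hcd

lemma boundedIncrease_uPL_left
    (hrow : ∀ i j, 1 ≤ i → i < N₁ → 1 ≤ j → j ≤ N₂ →
      g i j ≤ g (i + 1) j ∧ g (i + 1) j ≤ g i j + L * (x (i + 1) - x i))
    (hq : q ∈ Set.Icc (y 1) (y N₂)) {p p' : ℝ} (hp : x 1 ≤ p) (hpp : p ≤ p') (hp' : p' ≤ x N₁) :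
    BoundedIncrease L (uPL N₁ N₂ x y g · q) p p' := by
  obtain ⟨j, hj, hjN, hqj⟩ := exists_memX hN₂ hq.1 hq.2
  refine rel_of_cellwise (fun h h' => h.trans h') hN₁ ?_ hp hpp hp'
  intro i hi hiN p p' hp hpp hp'
  have cell := fun {p : ℝ} (hp : p ∈ Set.Icc (x i) (x (i + 1))) =>
    uPL_eq_cellMax hx hy hg hN₁ hN₂ hi hiN hj hjN hp hqj.mem_Icc
  simp only [BoundedIncrease, cell ⟨hp, hpp.trans hp'⟩, cell ⟨hp.trans hpp, hp'⟩]
  exact boundedIncrease_cellMax (hx.apply_lt_apply_add_one hi hiN)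
    (hrow i j hi hiN hj (by omega)) (hrow i (j + 1) hi hiN (by omega) (by omega)) q hpp

lemma boundedIncrease_uPL_right
    (hcol : ∀ i j, 1 ≤ i → i ≤ N₁ → 1 ≤ j → j < N₂ →
      g i j ≤ g i (j + 1) ∧ g i (j + 1) ≤ g i j + L * (y (j + 1) - y j))
    (hp : p ∈ Set.Icc (x 1) (x N₁)) {q q' : ℝ} (hq : y 1 ≤ q) (hqq : q ≤ q') (hq' : q' ≤ y N₂) :
    BoundedIncrease L (uPL N₁ N₂ x y g p ·) q q' := by
  have h := boundedIncrease_uPL_left hy hx hg.transpose hN₂ hN₁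
    (fun j i hj hjN hi hiN => hcol i j hi hiN hj hjN) hp hq hqq hq'
  simpa only [BoundedIncrease, uPL_transpose hx hy hg hN₁ hN₂ hp ⟨hq, hqq.trans hq'⟩,
    uPL_transpose hx hy hg hN₁ hN₂ hp ⟨hq.trans hqq, hq'⟩] using h

end Interpolant

section Membership

variable {N₁ N₂ : ℕ} {x y : ℕ → ℝ} {L : ℝ} {u : ℝ → ℝ → ℝ} {s t : Set ℝ}

lemma abs_sub_le_of_boundedIncrease₂
    (hX : ∀ q ∈ t, ∀ p ∈ s, ∀ p' ∈ s, p ≤ p' → BoundedIncrease L (u · q) p p')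
    (hY : ∀ p ∈ s, ∀ q ∈ t, ∀ q' ∈ t, q ≤ q' → BoundedIncrease L (u p ·) q q') :
    ∀ p p' q q', p ∈ s → p' ∈ s → q ∈ t → q' ∈ t →
      |u p q - u p' q'| ≤ L * (|p - p'| + |q - q'|) := by
  intro p p' q q' hp hp' hq hq'
  calc |u p q - u p' q'| ≤ |u p q - u p' q| + |u p' q - u p' q'| := abs_sub_le _ _ _
    _ ≤ L * |p - p'| + L * |q - q'| :=
      add_le_add (abs_sub_le_of_boundedIncrease (hX q hq) hp hp')
        (abs_sub_le_of_boundedIncrease (hY p' hp') hq hq')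
    _ = L * (|p - p'| + |q - q'|) := by ring

lemma continuousOn_of_abs_sub_le
    (h : ∀ p p' q q', p ∈ s → p' ∈ s → q ∈ t → q' ∈ t →
      |u p q - u p' q'| ≤ L * (|p - p'| + |q - q'|)) :
    ContinuousOn (fun z : ℝ × ℝ => u z.1 z.2) (s ×ˢ t) := by
  refine (LipschitzOnWith.of_dist_le_mul (K := (2 * L).toNNReal) ?_).continuousOn
  rintro ⟨p, q⟩ ⟨hp, hq⟩ ⟨p', q'⟩ ⟨hp', hq'⟩
  rw [Real.coe_toNNReal', Prod.dist_eq, Real.dist_eq, Real.dist_eq, Real.dist_eq]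
  have := h p p' q q' hp hp' hq hq'
  have := le_max_left |p - p'| |q - q'|
  have := le_max_right |p - p'| |q - q'|
  have := le_max_left (2 * L) 0
  nlinarith [abs_nonneg (p - p'), abs_nonneg (q - q'), le_max_right (2 * L) 0]

lemma ConservativeOn.gridConservative (hx : StrictMonoOn x (Set.Icc 1 N₁))
    (hy : StrictMonoOn y (Set.Icc 1 N₂)) (hu : ConservativeOn (x 1) (x N₁) (y 1) (y N₂) u) :
    GridConservative N₁ N₂ fun i j => u (x i) (y j) := fun i j hi hiN hj hjN => by
  have := hu (x i) (x (i + 1)) (y j) (y (j + 1)) (hx.apply_mem_Icc hi hiN.le).1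
    (hx.apply_lt_apply_add_one hi hiN).le (hx.apply_mem_Icc (by omega) hiN).2
    (hy.apply_mem_Icc hj hjN.le).1 (hy.apply_lt_apply_add_one hj hjN).le
    (hy.apply_mem_Icc (by omega) hjN).2
  linarith

lemma memU.conservativeOn (hu : memU N₁ N₂ x y L u) :
    ConservativeOn (x 1) (x N₁) (y 1) (y N₂) u :=
  hu.2.2.2.2.2.1

lemma memU.boundedIncrease_left (hu : memU N₁ N₂ x y L u) {q : ℝ}
    (hq : q ∈ Set.Icc (y 1) (y N₂)) {p p' : ℝ} (hp : p ∈ Set.Icc (x 1) (x N₁))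
    (hp' : p' ∈ Set.Icc (x 1) (x N₁)) (hpp : p ≤ p') : BoundedIncrease L (u · q) p p' := by
  obtain ⟨-, hmono, -, -, -, -, hlip⟩ := hu
  have h := hlip p' p q q hp' hp hq hq
  rw [sub_self, abs_zero, add_zero, abs_of_nonneg (sub_nonneg.mpr hpp)] at h
  exact ⟨hmono p p' q q hp hp' hq hq hpp le_rfl, by linarith [le_abs_self (u p' q - u p q)]⟩

lemma memU.boundedIncrease_right (hu : memU N₁ N₂ x y L u) {p : ℝ}
    (hp : p ∈ Set.Icc (x 1) (x N₁)) {q q' : ℝ} (hq : q ∈ Set.Icc (y 1) (y N₂))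
    (hq' : q' ∈ Set.Icc (y 1) (y N₂)) (hqq : q ≤ q') : BoundedIncrease L (u p ·) q q' := by
  obtain ⟨-, hmono, -, -, -, -, hlip⟩ := hu
  have h := hlip p p q' q hp hp hq' hq
  rw [sub_self, abs_zero, zero_add, abs_of_nonneg (sub_nonneg.mpr hqq)] at h
  exact ⟨hmono p p q q' hp hp hq hq' le_rfl hqq, by linarith [le_abs_self (u p q' - u p q)]⟩

variable (hN₁ : 2 ≤ N₁) (hN₂ : 2 ≤ N₂) (hx : StrictMonoOn x (Set.Icc 1 N₁))
  (hy : StrictMonoOn y (Set.Icc 1 N₂))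
include hN₁ hN₂ hx hy

lemma memU_uPL (hu : memU N₁ N₂ x y L u) :
    memU N₁ N₂ x y L (uPL N₁ N₂ x y fun i j => u (x i) (y j)) := by
  set V := uPL N₁ N₂ x y fun i j => u (x i) (y j)
  have hg := hu.conservativeOn.gridConservative hx hy
  have hX : ∀ q ∈ Set.Icc (y 1) (y N₂), ∀ p ∈ Set.Icc (x 1) (x N₁), ∀ p' ∈ Set.Icc (x 1) (x N₁),
      p ≤ p' → BoundedIncrease L (V · q) p p' := fun q hq p hp p' hp' hpp =>
    boundedIncrease_uPL_left hx hy hg hN₁ hN₂ (fun i j hi hiN hj hjN =>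
      hu.boundedIncrease_left (hy.apply_mem_Icc hj hjN) (hx.apply_mem_Icc hi hiN.le)
        (hx.apply_mem_Icc (by omega) hiN) (hx.apply_lt_apply_add_one hi hiN).le) hq hp.1 hpp hp'.2
  have hY : ∀ p ∈ Set.Icc (x 1) (x N₁), ∀ q ∈ Set.Icc (y 1) (y N₂), ∀ q' ∈ Set.Icc (y 1) (y N₂),
      q ≤ q' → BoundedIncrease L (V p ·) q q' := fun p hp q hq q' hq' hqq =>
    boundedIncrease_uPL_right hx hy hg hN₁ hN₂ (fun i j hi hiN hj hjN =>
      hu.boundedIncrease_right (hx.apply_mem_Icc hi hiN) (hy.apply_mem_Icc hj hjN.le)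
        (hy.apply_mem_Icc (by omega) hjN) (hy.apply_lt_apply_add_one hj hjN).le) hp hq.1 hqq hq'.2
  have hmono : ∀ p p' q q', p ∈ Set.Icc (x 1) (x N₁) → p' ∈ Set.Icc (x 1) (x N₁) →
      q ∈ Set.Icc (y 1) (y N₂) → q' ∈ Set.Icc (y 1) (y N₂) → p ≤ p' → q ≤ q' → V p q ≤ V p' q' :=
    fun p p' q q' hp hp' hq hq' hpp hqq =>
      (hX q hq p hp p' hp' hpp).1.trans (hY p' hp' q hq q' hq' hqq).1
  obtain ⟨-, -, -, hu₀, hu₁, -, -⟩ := hu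
  have h₀ : V (x 1) (y 1) = 0 :=
    (uPL_grid hx hy hg hN₁ hN₂ le_rfl (by omega) le_rfl (by omega)).trans hu₀
  have h₁ : V (x N₁) (y N₂) = 1 :=
    (uPL_grid hx hy hg hN₁ hN₂ (by omega) le_rfl (by omega) le_rfl).trans hu₁
  have hlip := abs_sub_le_of_boundedIncrease₂ hX hY
  have hx₁ := hx.apply_mem_Icc le_rfl (by omega)
  have hy₁ := hy.apply_mem_Icc le_rfl (by omega)
  have hxN := hx.apply_mem_Icc (by omega) le_rfl
  have hyN := hy.apply_mem_Icc (by omega) le_rfl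
  refine ⟨continuousOn_of_abs_sub_le hlip, hmono, fun p hp q hq => ⟨?_, ?_⟩, h₀, h₁,
    uPL_conservative hx hy hg hN₁ hN₂, hlip⟩
  · exact h₀ ▸ hmono _ _ _ _ hx₁ hp hy₁ hq hp.1 hq.1
  · exact h₁ ▸ hmono _ _ _ _ hp hxN hq hyN hp.2 hq.2

lemma memUNc_uPL {M : ℕ} {a : ℕ → ℕ → ℕ → ℝ} {c : ℕ → ℝ} (hu : memUc N₁ N₂ M x y L a c u) :
    memUNc N₁ N₂ M x y L a c (uPL N₁ N₂ x y fun i j => u (x i) (y j)) := by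
  have hg := hu.1.conservativeOn.gridConservative hx hy
  have grid := fun i j hi hiN hj hjN => uPL_grid (i := i) (j := j) hx hy hg hN₁ hN₂ hi hiN hj hjN
  refine ⟨⟨memU_uPL hN₁ hN₂ hx hy hu.1, fun l hl => le_of_eq_of_le ?_ (hu.2 l hl)⟩,
    fun p _ q _ => uPL_congr (fun i j hi hiN hj hjN => (grid i j hi hiN hj hjN).symm) p q⟩
  refine Finset.sum_congr rfl fun i hi => Finset.sum_congr rfl fun j hj => ?_
  rw [grid i j (Finset.mem_Icc.mp hi).1 (Finset.mem_Icc.mp hi).2 (Finset.mem_Icc.mp hj).1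
    (Finset.mem_Icc.mp hj).2]

end Membership

def rectIncr (x₁ y₁ : ℝ) (u : ℝ → ℝ → ℝ) (p q : ℝ) : ℝ :=
  u p q - u p y₁ - u x₁ q + u x₁ y₁

section RectIncr

variable {x₁ x₂ y₁ y₂ a b c d : ℝ} {u v : ℝ → ℝ → ℝ}

lemma rectIncr_antitone (hu : ConservativeOn x₁ x₂ y₁ y₂ u) (ha : x₁ ≤ a) (hab : a ≤ b)
    (hb : b ≤ x₂) (hc : y₁ ≤ c) (hcd : c ≤ d) (hd : d ≤ y₂) :
    rectIncr x₁ y₁ u b d ≤ rectIncr x₁ y₁ u a c := by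
  have := hu a b y₁ d ha hab hb le_rfl (hc.trans hcd) hd
  have := hu x₁ a c d le_rfl ha (hab.trans hb) hc hcd hd
  simp only [rectIncr]
  linarith

lemma abs_rectIncr_sub_le (hu : ConservativeOn x₁ x₂ y₁ y₂ u)
    (hv : ConservativeOn x₁ x₂ y₁ y₂ v) (hac : rectIncr x₁ y₁ u a c = rectIncr x₁ y₁ v a c)
    (hbd : rectIncr x₁ y₁ u b d = rectIncr x₁ y₁ v b d) (ha : x₁ ≤ a) (hb : b ≤ x₂) (hc : y₁ ≤ c)
    (hd : d ≤ y₂) {p q : ℝ} (hp : p ∈ Set.Icc a b) (hq : q ∈ Set.Icc c d) :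
    |rectIncr x₁ y₁ u p q - rectIncr x₁ y₁ v p q| ≤
      rectIncr x₁ y₁ u a c - rectIncr x₁ y₁ u b d := by
  have := rectIncr_antitone hu ha hp.1 (hp.2.trans hb) hc hq.1 (hq.2.trans hd)
  have := rectIncr_antitone hu (ha.trans hp.1) hp.2 hb (hc.trans hq.1) hq.2 hd
  have := rectIncr_antitone hv ha hp.1 (hp.2.trans hb) hc hq.1 (hq.2.trans hd)
  have := rectIncr_antitone hv (ha.trans hp.1) hp.2 hb (hc.trans hq.1) hq.2 hd
  rw [abs_sub_le_iff]
  constructor <;> linarith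

lemma rectIncr_sub_rectIncr_le {L : ℝ}
    (hu : ∀ p p' q q', p ∈ Set.Icc x₁ x₂ → p' ∈ Set.Icc x₁ x₂ → q ∈ Set.Icc y₁ y₂ →
      q' ∈ Set.Icc y₁ y₂ → |u p q - u p' q'| ≤ L * (|p - p'| + |q - q'|))
    (ha : x₁ ≤ a) (hab : a ≤ b) (hb : b ≤ x₂) (hc : y₁ ≤ c) (hcd : c ≤ d) (hd : d ≤ y₂) :
    rectIncr x₁ y₁ u a c - rectIncr x₁ y₁ u b d ≤ 2 * L * ((b - a) + (d - c)) := by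
  have hA : a ∈ Set.Icc x₁ x₂ := ⟨ha, hab.trans hb⟩
  have hB : b ∈ Set.Icc x₁ x₂ := ⟨ha.trans hab, hb⟩
  have hC : c ∈ Set.Icc y₁ y₂ := ⟨hc, hcd.trans hd⟩
  have hD : d ∈ Set.Icc y₁ y₂ := ⟨hc.trans hcd, hd⟩
  have hX₁ : x₁ ∈ Set.Icc x₁ x₂ := ⟨le_rfl, ha.trans (hab.trans hb)⟩
  have hY₁ : y₁ ∈ Set.Icc y₁ y₂ := ⟨le_rfl, hc.trans (hcd.trans hd)⟩
  have h₁ := hu b a d c hB hA hD hC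
  have h₂ := hu b a y₁ y₁ hB hA hY₁ hY₁
  have h₃ := hu x₁ x₁ d c hX₁ hX₁ hD hC
  simp only [sub_self, abs_zero, add_zero, zero_add, abs_of_nonneg (sub_nonneg.mpr hab),
    abs_of_nonneg (sub_nonneg.mpr hcd)] at h₁ h₂ h₃
  simp only [rectIncr]
  linarith [le_abs_self (u b y₁ - u a y₁), le_abs_self (u x₁ d - u x₁ c),
    neg_abs_le (u b d - u a c)]

end RectIncr

lemma abs_rectIncr_sub_rectIncr_uPL_le {N₁ N₂ : ℕ} {x y : ℕ → ℝ} {L β₁ β₂ p q : ℝ}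
    {u : ℝ → ℝ → ℝ} (hN₁ : 2 ≤ N₁) (hN₂ : 2 ≤ N₂) (hx : StrictMonoOn x (Set.Icc 1 N₁))
    (hy : StrictMonoOn y (Set.Icc 1 N₂)) (hL : 0 ≤ L) (hu : memU N₁ N₂ x y L u)
    (hβ₁ : ∀ i, 1 ≤ i → i < N₁ → x (i + 1) - x i ≤ β₁)
    (hβ₂ : ∀ j, 1 ≤ j → j < N₂ → y (j + 1) - y j ≤ β₂)
    (hp : p ∈ Set.Icc (x 1) (x N₁)) (hq : q ∈ Set.Icc (y 1) (y N₂)) :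
    |rectIncr (x 1) (y 1) u p q - rectIncr (x 1) (y 1) (uPL N₁ N₂ x y fun i j => u (x i) (y j)) p q|
      ≤ 2 * L * (β₁ + β₂) := by
  have hg := hu.conservativeOn.gridConservative hx hy
  have hV := uPL_conservative hx hy hg hN₁ hN₂
  obtain ⟨-, -, -, -, -, hcons, hlip⟩ := hu
  have grid : ∀ k l, 1 ≤ k → k ≤ N₁ → 1 ≤ l → l ≤ N₂ → rectIncr (x 1) (y 1) u (x k) (y l) =
      rectIncr (x 1) (y 1) (uPL N₁ N₂ x y fun i j => u (x i) (y j)) (x k) (y l) :=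
    fun k l hk hkN hl hlN => by
      simp only [rectIncr, uPL_grid hx hy hg hN₁ hN₂ hk hkN hl hlN,
        uPL_grid hx hy hg hN₁ hN₂ hk hkN le_rfl (by omega : 1 ≤ N₂),
        uPL_grid hx hy hg hN₁ hN₂ le_rfl (by omega : 1 ≤ N₁) hl hlN,
        uPL_grid hx hy hg hN₁ hN₂ le_rfl (by omega : 1 ≤ N₁) le_rfl (by omega : 1 ≤ N₂)]
  obtain ⟨i, hi, hiN, hpi⟩ := exists_memX hN₁ hp.1 hp.2
  obtain ⟨j, hj, hjN, hqj⟩ := exists_memX hN₂ hq.1 hq.2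
  have hxi := hx.apply_mem_Icc hi hiN.le
  have hxi' := hx.apply_mem_Icc (by omega) hiN
  have hyj := hy.apply_mem_Icc hj hjN.le
  have hyj' := hy.apply_mem_Icc (by omega) hjN
  calc _ ≤ rectIncr (x 1) (y 1) u (x i) (y j) - rectIncr (x 1) (y 1) u (x (i + 1)) (y (j + 1)) :=
        abs_rectIncr_sub_le hcons hV (grid i j hi hiN.le hj hjN.le)
          (grid (i + 1) (j + 1) (by omega) hiN (by omega) hjN) hxi.1 hxi'.2 hyj.1 hyj'.2
          hpi.mem_Icc hqj.mem_Icc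
    _ ≤ 2 * L * ((x (i + 1) - x i) + (y (j + 1) - y j)) :=
        rectIncr_sub_rectIncr_le hlip hxi.1 (hx.apply_lt_apply_add_one hi hiN).le hxi'.2 hyj.1
          (hy.apply_lt_apply_add_one hj hjN).le hyj'.2
    _ ≤ 2 * L * (β₁ + β₂) := by
        gcongr
        exacts [hβ₁ i hi hiN, hβ₂ j hj hjN]

/-- Corollary 5.1 (Kolmogorov pseudo-metric, simple-function case): every `u ∈ 𝒰^c` is within
Kolmogorov pseudo-distance `2L(β₁+β₂)` of its Type-1 PLA, which belongs to `𝒰_N^c`; since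
`𝒰_N^c ⊆ 𝒰^c`, both deviations defining the Hausdorff distance are bounded by `2L(β₁+β₂)`. -/
theorem corollary51_hausdorff_bound
    (N₁ N₂ M : ℕ) (hN₁ : 2 ≤ N₁) (hN₂ : 2 ≤ N₂)
    (x y : ℕ → ℝ)
    (hx : ∀ i, 1 ≤ i → i < N₁ → x i < x (i + 1))
    (hy : ∀ j, 1 ≤ j → j < N₂ → y j < y (j + 1))
    (L : ℝ) (hL : 0 < L)
    (a : ℕ → ℕ → ℕ → ℝ) (c : ℕ → ℝ) :
    let β₁ := (Finset.Icc 1 (N₁ - 1)).sup' (Finset.nonempty_Icc.mpr (by omega))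
      (fun i => x (i + 1) - x i)
    let β₂ := (Finset.Icc 1 (N₂ - 1)).sup' (Finset.nonempty_Icc.mpr (by omega))
      (fun j => y (j + 1) - y j)
    let dIle : (ℝ → ℝ → ℝ) → (ℝ → ℝ → ℝ) → ℝ → Prop := fun u v r =>
      ∀ p ∈ Set.Icc (x 1) (x N₁), ∀ q ∈ Set.Icc (y 1) (y N₂),
        |(u p q - u p (y 1) - u (x 1) q + u (x 1) (y 1))
            - (v p q - v p (y 1) - v (x 1) q + v (x 1) (y 1))| ≤ r
    (∀ u : ℝ → ℝ → ℝ, memUc N₁ N₂ M x y L a c u →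
      memUNc N₁ N₂ M x y L a c (uPL N₁ N₂ x y (fun i j => u (x i) (y j))) ∧
      dIle u (uPL N₁ N₂ x y (fun i j => u (x i) (y j))) (2 * L * (β₁ + β₂))) ∧
    (∀ v : ℝ → ℝ → ℝ, memUNc N₁ N₂ M x y L a c v → memUc N₁ N₂ M x y L a c v) ∧
    (∀ u : ℝ → ℝ → ℝ, memUc N₁ N₂ M x y L a c u →
      ∃ v : ℝ → ℝ → ℝ, memUNc N₁ N₂ M x y L a c v ∧ dIle u v (2 * L * (β₁ + β₂))) ∧
    (∀ v : ℝ → ℝ → ℝ, memUNc N₁ N₂ M x y L a c v →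
      ∃ u : ℝ → ℝ → ℝ, memUc N₁ N₂ M x y L a c u ∧ dIle v u (2 * L * (β₁ + β₂))) := by
  intro β₁ β₂ dIle
  have hxs : StrictMonoOn x (Set.Icc 1 N₁) :=
    strictMonoOn_of_lt_add_one Set.ordConnected_Icc fun i _ hi hi' => hx i hi.1 hi'.2
  have hys : StrictMonoOn y (Set.Icc 1 N₂) :=
    strictMonoOn_of_lt_add_one Set.ordConnected_Icc fun j _ hj hj' => hy j hj.1 hj'.2
  have hβ₁ : ∀ i, 1 ≤ i → i < N₁ → x (i + 1) - x i ≤ β₁ := fun i hi hiN =>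
    Finset.le_sup' (fun i => x (i + 1) - x i) (Finset.mem_Icc.mpr ⟨hi, by omega⟩)
  have hβ₂ : ∀ j, 1 ≤ j → j < N₂ → y (j + 1) - y j ≤ β₂ := fun j hj hjN =>
    Finset.le_sup' (fun j => y (j + 1) - y j) (Finset.mem_Icc.mpr ⟨hj, by omega⟩)
  have approx : ∀ u, memUc N₁ N₂ M x y L a c u →
      memUNc N₁ N₂ M x y L a c (uPL N₁ N₂ x y fun i j => u (x i) (y j)) ∧
      dIle u (uPL N₁ N₂ x y fun i j => u (x i) (y j)) (2 * L * (β₁ + β₂)) := fun u hu =>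
    ⟨memUNc_uPL hN₁ hN₂ hxs hys hu, fun p hp q hq =>
      abs_rectIncr_sub_rectIncr_uPL_le hN₁ hN₂ hxs hys hL.le hu.1 hβ₁ hβ₂ hp hq⟩
  have hbound : 0 ≤ 2 * L * (β₁ + β₂) := by
    have := (sub_pos.mpr (hx 1 le_rfl (by omega))).le.trans (hβ₁ 1 le_rfl (by omega))
    have := (sub_pos.mpr (hy 1 le_rfl (by omega))).le.trans (hβ₂ 1 le_rfl (by omega))
    positivity
  refine ⟨approx, fun v hv => hv.1, fun u hu => ⟨_, approx u hu⟩, fun v hv => ⟨v, hv.1, ?_⟩⟩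
  intro p _ q _
  simpa using hbound

end
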